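/- arXiv:2411.14341 — 2 statements merged into one kernel-verified Lean document; each statement's English description precedes it below -/
import Mathlib

section
/- Fix real numbers $t > 0$ and $\alpha_0, \alpha_1, \gamma_0, \gamma_1 > 0$, and define $f : (0, t) \to \mathbb{R}$ by $f(x) = \frac{\alpha_1 - \gamma_1/\sqrt{x}}{\alpha_0 + \gamma_0/\sqrt{t-x} + \alpha_1 - \gamma_1/\sqrt{x}}$ (assuming the denominator is positive on the domain considered). Then for any interval $[s, r] \subseteq [1, t)$ on which $f$ is well-defined, every minimizer $x^*$ of $f$ over $[s, r]$ satisfies $x^* \in \{s, r\}$. -/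
/-!
Write `f = N / (N + H)` with `N y = α₁ - γ₁/√y` and `H y = α₀ + γ₀/√(t-y)`. Clearing the
positive denominators, a minimiser `x` of `f` on `[s, r]` is a minimiser of the
cross-difference `g y = H x * N y - N x * H y`, which vanishes at `x`. Here `N` is strictly
increasing and strictly concave, `H` is increasing and convex, and `H x > 0`. So if `N x < 0`
then `g` is strictly increasing, and otherwise `g` is strictly concave; either way `g` has no
minimiser in the interior of `[s, r]`.
-/

open Set

theorem StrictMonoOn.eq_left_of_isMinOn_Icc {α β : Type*} [PartialOrder α] [Preorder β]
    {f : α → β} {a b x : α} (hf : StrictMonoOn f (Icc a b)) (hx : x ∈ Icc a b)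
    (hmin : IsMinOn f (Icc a b) x) : x = a := by
  have ha : a ∈ Icc a b := ⟨le_rfl, hx.1.trans hx.2⟩
  by_contra hxa
  exact (hf ha hx (lt_of_le_of_ne hx.1 (Ne.symm hxa))).not_ge (hmin ha)

theorem StrictConcaveOn.eq_left_or_eq_right_of_isMinOn_Icc {f : ℝ → ℝ} {a b x : ℝ}
    (hf : StrictConcaveOn ℝ (Icc a b) f) (hx : x ∈ Icc a b) (hmin : IsMinOn f (Icc a b) x) :
    x = a ∨ x = b := by
  by_contra! hne
  have hax : a < x := lt_of_le_of_ne hx.1 hne.1.symm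
  have hxb : x < b := lt_of_le_of_ne hx.2 hne.2
  have hab : a < b := hax.trans hxb
  have hseg : x ∈ openSegment ℝ a b := by rw [openSegment_eq_Ioo hab]; exact ⟨hax, hxb⟩
  have hlt := hf.lt_on_openSegment (left_mem_Icc.2 hab.le) (right_mem_Icc.2 hab.le) hab.ne hseg
  exact hlt.not_ge (le_min (hmin (left_mem_Icc.2 hab.le)) (hmin (right_mem_Icc.2 hab.le)))

theorem isMinOn_mul_sub_mul_of_isMinOn_div_add {N H : ℝ → ℝ} {S : Set ℝ} {x : ℝ}
    (hpos : ∀ y ∈ S, 0 < N y + H y) (hx : x ∈ S)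
    (hmin : IsMinOn (fun y => N y / (N y + H y)) S x) :
    IsMinOn (fun y => H x * N y - N x * H y) S x := by
  intro y hy
  have h := hmin hy
  simp only [mem_ofPred_eq, div_le_div_iff₀ (hpos x hx) (hpos y hy)] at h ⊢
  linarith

theorem StrictMonoOn.const_mul_sub_const_mul {N H : ℝ → ℝ} {S : Set ℝ} {c d : ℝ}
    (hc : 0 < c) (hd : d ≤ 0) (hN : StrictMonoOn N S) (hH : MonotoneOn H S) :
    StrictMonoOn (fun y => c * N y - d * H y) S := by
  intro a ha b hb hab
  have h1 := mul_lt_mul_of_pos_left (hN ha hb hab) hc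
  have h2 := mul_le_mul_of_nonneg_left (hH ha hb hab.le) (neg_nonneg.2 hd)
  simp only
  linarith

theorem StrictConcaveOn.const_mul_sub_const_mul {N H : ℝ → ℝ} {S : Set ℝ} {c d : ℝ}
    (hc : 0 < c) (hd : 0 ≤ d) (hN : StrictConcaveOn ℝ S N) (hH : ConvexOn ℝ S H) :
    StrictConcaveOn ℝ S (fun y => c * N y - d * H y) := by
  refine ⟨hN.1, fun x hx y hy hxy a b ha hb hab => ?_⟩
  have h1 := mul_lt_mul_of_pos_left (hN.2 hx hy hxy ha hb hab) hc
  have h2 := mul_le_mul_of_nonneg_left (hH.2 hx hy ha.le hb.le hab) hd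
  simp only [smul_eq_mul] at h1 h2 ⊢
  linarith

theorem Real.sqrt_image_Ioi_zero : Real.sqrt '' Ioi 0 = Ioi 0 := by
  ext y
  constructor
  · rintro ⟨x, hx, rfl⟩
    exact Real.sqrt_pos.2 hx
  · intro hy
    exact ⟨y ^ 2, mem_Ioi.2 (pow_pos hy 2), Real.sqrt_sq (le_of_lt hy)⟩

theorem strictConvexOn_inv_sqrt : StrictConvexOn ℝ (Ioi 0) fun x : ℝ => (√x)⁻¹ := by
  have hinv : ConvexOn ℝ (Real.sqrt '' Ioi 0) fun u : ℝ => u⁻¹ := by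
    simpa [Real.sqrt_image_Ioi_zero, zpow_neg_one] using convexOn_zpow (𝕜 := ℝ) (-1)
  have hanti : StrictAntiOn (fun u : ℝ => u⁻¹) (Real.sqrt '' Ioi 0) := by
    rw [Real.sqrt_image_Ioi_zero]; exact strictAntiOn_inv_pos
  exact hinv.comp_strictConcaveOn
    (Real.strictConcaveOn_sqrt.subset Ioi_subset_Ici_self (convex_Ioi 0)) hanti

theorem strictAntiOn_inv_sqrt : StrictAntiOn (fun x : ℝ => (√x)⁻¹) (Ioi 0) :=
  strictAntiOn_inv_pos.comp_strictMonoOn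
    (fun _ ha _ _ hab => Real.sqrt_lt_sqrt (le_of_lt ha) hab) fun _ hx => Real.sqrt_pos.2 hx

theorem strictMonoOn_sub_div_sqrt (α : ℝ) {γ : ℝ} (hγ : 0 < γ) :
    StrictMonoOn (fun y : ℝ => α - γ / √y) (Ioi 0) := by
  intro a ha b hb hab
  have := mul_lt_mul_of_pos_left (strictAntiOn_inv_sqrt ha hb hab) hγ
  simp only [div_eq_mul_inv]
  linarith

theorem strictConcaveOn_sub_div_sqrt (α : ℝ) {γ : ℝ} (hγ : 0 < γ) :
    StrictConcaveOn ℝ (Ioi 0) fun y : ℝ => α - γ / √y := by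
  refine ⟨convex_Ioi 0, fun x hx y hy hxy a b ha hb hab => ?_⟩
  have h := mul_lt_mul_of_pos_left (strictConvexOn_inv_sqrt.2 hx hy hxy ha hb hab) hγ
  have hα : α = a * α + b * α := by rw [← add_mul, hab, one_mul]
  simp only [smul_eq_mul, div_eq_mul_inv] at h ⊢
  linarith

theorem monotoneOn_add_div_sqrt_sub (α t : ℝ) {γ : ℝ} (hγ : 0 ≤ γ) :
    MonotoneOn (fun y : ℝ => α + γ / √(t - y)) (Iio t) := by
  intro a ha b hb hab
  have h := strictAntiOn_inv_sqrt.antitoneOn (mem_Ioi.2 (sub_pos.2 hb)) (mem_Ioi.2 (sub_pos.2 ha))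
    (sub_le_sub_left hab t)
  simp only [div_eq_mul_inv]
  linarith [mul_le_mul_of_nonneg_left h hγ]

theorem convexOn_add_div_sqrt_sub (α t : ℝ) {γ : ℝ} (hγ : 0 ≤ γ) :
    ConvexOn ℝ (Iio t) fun y : ℝ => α + γ / √(t - y) := by
  refine ⟨convex_Iio t, fun x hx y hy a b ha hb hab => ?_⟩
  have hxy : t - (a * x + b * y) = a * (t - x) + b * (t - y) := by
    linear_combination (-t) * hab
  have h := strictConvexOn_inv_sqrt.convexOn.2 (mem_Ioi.2 (sub_pos.2 hx))
    (mem_Ioi.2 (sub_pos.2 hy)) ha hb hab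
  have hα : α = a * α + b * α := by rw [← add_mul, hab, one_mul]
  simp only [smul_eq_mul, div_eq_mul_inv] at h ⊢
  rw [hxy]
  linarith [mul_le_mul_of_nonneg_left h hγ]

theorem count_interval_optimization_general
    (t α0 α1 γ0 γ1 s r : ℝ)
    (hα0 : 0 < α0) (hγ0 : 0 < γ0) (hγ1 : 0 < γ1)
    (hs : 1 ≤ s) (hrt : r < t)
    (f : ℝ → ℝ)
    (hf : ∀ x, f x = (α1 - γ1 / Real.sqrt x) /
        (α0 + γ0 / Real.sqrt (t - x) + α1 - γ1 / Real.sqrt x))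
    (hden : ∀ x ∈ Set.Icc s r,
      0 < α0 + γ0 / Real.sqrt (t - x) + α1 - γ1 / Real.sqrt x) :
    ∀ x ∈ Set.Icc s r, (∀ y ∈ Set.Icc s r, f x ≤ f y) → x = s ∨ x = r := by
  intro x hx hmin
  set N : ℝ → ℝ := fun y => α1 - γ1 / √y
  set H : ℝ → ℝ := fun y => α0 + γ0 / √(t - y)
  have hpos : Icc s r ⊆ Ioi 0 := fun y hy => zero_lt_one.trans_le (hs.trans hy.1)
  have hlt : Icc s r ⊆ Iio t := fun y hy => hy.2.trans_lt hrt
  have hf' : ∀ y, f y = N y / (N y + H y) := fun y => by rw [hf]; ring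
  have hcross : IsMinOn (fun y => H x * N y - N x * H y) (Icc s r) x :=
    isMinOn_mul_sub_mul_of_isMinOn_div_add (fun y hy => by linarith [hden y hy]) hx
      fun y hy => by simpa only [mem_ofPred_eq, ← hf'] using hmin y hy
  have hHx : 0 < H x := add_pos_of_pos_of_nonneg hα0 (by positivity)
  rcases lt_or_ge (N x) 0 with hNx | hNx
  · left
    refine StrictMonoOn.eq_left_of_isMinOn_Icc ?_ hx hcross
    exact ((strictMonoOn_sub_div_sqrt α1 hγ1).mono hpos).const_mul_sub_const_mul hHx hNx.le
      ((monotoneOn_add_div_sqrt_sub α0 t hγ0.le).mono hlt)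
  · refine StrictConcaveOn.eq_left_or_eq_right_of_isMinOn_Icc ?_ hx hcross
    exact StrictConcaveOn.const_mul_sub_const_mul hHx hNx
      ((strictConcaveOn_sub_div_sqrt α1 hγ1).subset hpos (convex_Icc s r))
      ((convexOn_add_div_sqrt_sub α0 t hγ0.le).subset hlt (convex_Icc s r))

/-- The minimizer of `f(x) = (α₁ - γ₁/√x)/(α₀ + γ₀/√(t-x) + α₁ - γ₁/√x)` over a
closed subinterval `[s,r] ⊆ [1,t)` occurs at an endpoint. -/
theorem count_interval_optimization
    (t α0 α1 γ0 γ1 s r : ℝ)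
    (ht : 0 < t) (hα0 : 0 < α0) (hα1 : 0 < α1) (hγ0 : 0 < γ0) (hγ1 : 0 < γ1)
    (hs : 1 ≤ s) (hsr : s ≤ r) (hrt : r < t)
    (f : ℝ → ℝ)
    (hf : ∀ x, f x = (α1 - γ1 / Real.sqrt x) /
        (α0 + γ0 / Real.sqrt (t - x) + α1 - γ1 / Real.sqrt x))
    (hden : ∀ x ∈ Set.Icc s r,
      0 < α0 + γ0 / Real.sqrt (t - x) + α1 - γ1 / Real.sqrt x) :
    ∀ x ∈ Set.Icc s r, (∀ y ∈ Set.Icc s r, f x ≤ f y) → x = s ∨ x = r :=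
  count_interval_optimization_general t α0 α1 γ0 γ1 s r hα0 hγ0 hγ1 hs hrt f hf hden
end

section
/- Fix $\alpha \in (0, 1/2)$ and $\delta \in (0,1)$. Define $\ell(t,\delta) = \log\log t + 0.72 \log(5.2/\delta)$ and $h(t) = \frac{1 - t^{\alpha - 1}}{2(1-\alpha)} - t^{(2\alpha-1)/2}\sqrt{\ell(t,\delta)}$. Set $c_1 = \frac{2}{\alpha^2} + \frac{8(1-\alpha)^2}{\alpha^2} \log(5.2/\delta)$ and $c_2 = \frac{8(1-\alpha)^2}{\alpha^2}$. Then $h(t) \ge 1/2$ for all $t$ satisfying $t^{1-2\alpha} \ge c_1 + c_2 \log\log t$. -/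
/-!
Write `x = t^{(1-2α)/2}`, so that `t^{(2α-1)/2} = 1/x` and, for `t ≥ 1`, `t^{α-1} ≤ 1/x`.
Multiplying through by `x`, `h(t) ≥ 1/2` follows from `α x ≥ 1 + 2(1-α)√ℓ`.
By `(a+b)^2 ≤ 2a^2 + 2b^2` this is implied by `α^2 x^2 ≥ 2 + 8(1-α)^2 ℓ`, and the right-hand
side is at most `α^2 (c₁ + c₂ log log t)` because `0.72 ≤ 1` and `log (5.2/δ) ≥ 0`.
-/

open Real

lemma add_le_of_two_mul_sq_add_sq_le_sq {a b y : ℝ} (hy : 0 ≤ y)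
    (h : 2 * (a ^ 2 + b ^ 2) ≤ y ^ 2) : a + b ≤ y :=
  le_of_sq_le_sq (add_sq_le.trans h) hy

lemma rpow_div_two_sq {t : ℝ} (ht : 0 ≤ t) (a : ℝ) : (t ^ (a / 2)) ^ 2 = t ^ a := by
  rw [← rpow_two, ← rpow_mul ht, div_mul_cancel₀ a two_ne_zero]

lemma half_le_of_one_add_le_mul_rpow {t α S : ℝ} (ht : 1 ≤ t) (hα : α < 1)
    (hkey : 1 + 2 * (1 - α) * S ≤ α * t ^ ((1 - 2 * α) / 2)) :
    1 / 2 ≤ (1 - t ^ (α - 1)) / (2 * (1 - α)) - t ^ ((2 * α - 1) / 2) * S := by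
  set x := t ^ ((1 - 2 * α) / 2)
  have hx : 0 < x := rpow_pos_of_pos (by linarith) _
  have hinv : t ^ ((2 * α - 1) / 2) = x⁻¹ := by
    rw [← rpow_neg (by linarith)]; ring_nf
  have hmono : t ^ (α - 1) ≤ x⁻¹ := hinv ▸ rpow_le_rpow_of_exponent_le ht (by linarith)
  have hmono' : t ^ (α - 1) * x ≤ 1 :=
    (mul_le_mul_of_nonneg_right hmono hx.le).trans_eq (inv_mul_cancel₀ hx.ne')
  suffices (t ^ (α - 1) + 2 * (1 - α) * x⁻¹ * S) * x ≤ α * x by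
    rw [hinv, le_sub_iff_add_le, le_div_iff₀ (by linarith)]
    linarith [le_of_mul_le_mul_right this hx]
  calc (t ^ (α - 1) + 2 * (1 - α) * x⁻¹ * S) * x
      = t ^ (α - 1) * x + 2 * (1 - α) * S := by field_simp
    _ ≤ α * x := by linarith

/-- 'Slow increase' lower bound: `h(t) ≥ 1/2` once `t^{1-2α} ≥ c₁ + c₂ log log t`. -/
theorem slow_increase_lower_bound
    (α δ : ℝ) (hα : α ∈ Set.Ioo (0 : ℝ) (1 / 2)) (hδ : δ ∈ Set.Ioo (0 : ℝ) 1)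
    (ℓ : ℝ → ℝ → ℝ)
    (hℓ : ∀ t d, ℓ t d = Real.log (Real.log t) + 0.72 * Real.log (5.2 / d))
    (h : ℝ → ℝ)
    (hh : ∀ t, h t = (1 - t ^ (α - 1)) / (2 * (1 - α)) -
      t ^ ((2 * α - 1) / 2) * Real.sqrt (ℓ t δ))
    (c1 c2 : ℝ)
    (hc1 : c1 = 2 / α ^ 2 + 8 * (1 - α) ^ 2 / α ^ 2 * Real.log (5.2 / δ))
    (hc2 : c2 = 8 * (1 - α) ^ 2 / α ^ 2) :
    ∀ t : ℝ, Real.exp 1 ≤ t →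
      c1 + c2 * Real.log (Real.log t) ≤ t ^ (1 - 2 * α) → 1 / 2 ≤ h t := by
  intro t ht hcx
  obtain ⟨hα0, hα2⟩ := hα
  obtain ⟨hδ0, hδ1⟩ := hδ
  have ht1 : 1 ≤ t := (one_le_exp zero_le_one).trans ht
  have hloglog : 0 ≤ log (log t) :=
    log_nonneg ((le_log_iff_exp_le (by linarith)).2 ht)
  have hlogδ : 0 ≤ log (5.2 / δ) := log_nonneg (by rw [le_div_iff₀ hδ0]; linarith)
  have hℓ0 : 0 ≤ ℓ t δ := by rw [hℓ]; positivity
  have hc : α ^ 2 * (c1 + c2 * log (log t))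
      = 2 + 8 * (1 - α) ^ 2 * (log (log t) + log (5.2 / δ)) := by
    rw [hc1, hc2]; field_simp; ring
  rw [hh]
  refine half_le_of_one_add_le_mul_rpow ht1 (by linarith) ?_
  refine add_le_of_two_mul_sq_add_sq_le_sq (by positivity) ?_
  calc 2 * (1 ^ 2 + (2 * (1 - α) * √(ℓ t δ)) ^ 2)
      = 2 + 8 * (1 - α) ^ 2 * (log (log t) + 0.72 * log (5.2 / δ)) := by
        rw [mul_pow, sq_sqrt hℓ0, hℓ]; ring
    _ ≤ α ^ 2 * (c1 + c2 * log (log t)) := by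
        rw [hc]; gcongr; linarith
    _ ≤ α ^ 2 * t ^ (1 - 2 * α) := by gcongr
    _ = (α * t ^ ((1 - 2 * α) / 2)) ^ 2 := by rw [mul_pow, rpow_div_two_sq (by linarith)]
end
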